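/- Let (A, ∘) be a pre-Lie superalgebra over a field of characteristic zero and let R : A → A be a Rota-Baxter operator of weight zero on (A, ∘). Define x ∗ y := R(x)∘y − (−1)^{|x||y|} y∘R(x) for homogeneous x, y ∈ A. Then (A, ∗) is a pre-Lie superalgebra and R is a Rota-Baxter operator of weight zero on (A, ∗). -/
import Mathlib


/-- The super sign `(−1)^{|x||y|}` for parities `i`, `j`. -/
def sgn (K : Type*) [Field K] (i j : ZMod 2) : K := (-1 : K) ^ (i.val * j.val)

/-- The product `x ∗ y = R(x)∘y − (−1)^{|x||y|} y∘R(x)` on homogeneous elements of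
parities `i`, `j`. -/
def astOp {K A : Type*} [Field K] [AddCommGroup A] [Module K A]
    (circ : A →ₗ[K] A →ₗ[K] A) (R : A →ₗ[K] A) (i j : ZMod 2) (x y : A) : A :=
  circ (R x) y - sgn K i j • circ y (R x)

lemma zmod2cases (m : ZMod 2) : m = 0 ∨ m = 1 := by revert m; decide

lemma sgn_comm (K : Type*) [Field K] (i j : ZMod 2) : sgn K i j = sgn K j i := by
  simp [sgn, Nat.mul_comm]

lemma sgn_sq (K : Type*) [Field K] (i j : ZMod 2) : sgn K i j * sgn K i j = 1 := by
  rw [sgn, ← pow_add, ← two_mul, pow_mul]; norm_num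

lemma sgn_add_left (K : Type*) [Field K] (i j k : ZMod 2) :
    sgn K (i + j) k = sgn K i k * sgn K j k := by
  rcases zmod2cases i with rfl | rfl <;> rcases zmod2cases j with rfl | rfl <;>
    rcases zmod2cases k with rfl | rfl <;>
    norm_num [sgn, show ((2 : ZMod 2)).val = 0 by decide,
      show ((1:ZMod 2)).val = 1 by rfl, show ((0:ZMod 2)).val = 0 by rfl]

lemma sgn_add_right (K : Type*) [Field K] (i j k : ZMod 2) :
    sgn K i (j + k) = sgn K i j * sgn K i k := by
  rw [sgn_comm, sgn_add_left, sgn_comm K j i, sgn_comm K k i]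

/-- if `R` is a Rota-Baxter operator of weight zero on a pre-Lie
superalgebra `(A,∘)`, then `x ∗ y := R(x)∘y − (−1)^{|x||y|} y∘R(x)` makes `(A,∗)` a
pre-Lie superalgebra and `R` is a Rota-Baxter operator of weight zero on `(A,∗)`. -/
theorem stmt5 {K A : Type*} [Field K] [CharZero K] [AddCommGroup A] [Module K A]
    (𝒜 : ZMod 2 → Submodule K A) (hgr : DirectSum.IsInternal 𝒜)
    (circ : A →ₗ[K] A →ₗ[K] A)
    (hcirc_even : ∀ (i j : ZMod 2), ∀ x ∈ 𝒜 i, ∀ y ∈ 𝒜 j, circ x y ∈ 𝒜 (i + j))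
    (hpre : ∀ (i j k : ZMod 2), ∀ x ∈ 𝒜 i, ∀ y ∈ 𝒜 j, ∀ z ∈ 𝒜 k,
      circ (circ x y) z - circ x (circ y z)
        = sgn K i j • (circ (circ y x) z - circ y (circ x z)))
    (R : A →ₗ[K] A) (hR : ∀ (i : ZMod 2), ∀ x ∈ 𝒜 i, R x ∈ 𝒜 i)
    (hRB : ∀ (i j : ZMod 2), ∀ x ∈ 𝒜 i, ∀ y ∈ 𝒜 j,
      circ (R x) (R y) = R (circ (R x) y + circ x (R y))) :
    -- ∗ is even
    (∀ (i j : ZMod 2), ∀ x ∈ 𝒜 i, ∀ y ∈ 𝒜 j, astOp circ R i j x y ∈ 𝒜 (i + j)) ∧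
    -- pre-Lie super-identity for ∗
    (∀ (i j k : ZMod 2), ∀ x ∈ 𝒜 i, ∀ y ∈ 𝒜 j, ∀ z ∈ 𝒜 k,
      astOp circ R (i + j) k (astOp circ R i j x y) z
          - astOp circ R i (j + k) x (astOp circ R j k y z)
        = sgn K i j • (astOp circ R (i + j) k (astOp circ R j i y x) z
            - astOp circ R j (i + k) y (astOp circ R i k x z))) ∧
    -- R is a Rota-Baxter operator of weight zero on (A,∗)
    (∀ (i j : ZMod 2), ∀ x ∈ 𝒜 i, ∀ y ∈ 𝒜 j,
      astOp circ R i j (R x) (R y)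
        = R (astOp circ R i j (R x) y + astOp circ R i j x (R y))) := by
  refine ⟨?_, ?_, ?_⟩
  · -- evenness
    intro i j x hx y hy
    have h1 : circ (R x) y ∈ 𝒜 (i + j) := hcirc_even i j (R x) (hR i x hx) y hy
    have h2 : circ y (R x) ∈ 𝒜 (i + j) := by
      rw [add_comm]; exact hcirc_even j i y hy (R x) (hR i x hx)
    exact sub_mem h1 (Submodule.smul_mem _ _ h2)
  · -- pre-Lie identity
    intro i j k x hx y hy z hz
    have hx' : R x ∈ 𝒜 i := hR i x hx
    have hy' : R y ∈ 𝒜 j := hR j y hy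
    have e1 := hRB i j x hx y hy
    have e2 := hRB j i y hy x hx
    have g1 : circ (circ (R x) (R y)) z
        = circ (R (circ (R x) y)) z + circ (R (circ x (R y))) z := by
      rw [e1, map_add, map_add, LinearMap.add_apply]
    have g1' : circ z (circ (R x) (R y))
        = circ z (R (circ (R x) y)) + circ z (R (circ x (R y))) := by
      rw [e1, map_add, map_add]
    have g2 : circ (circ (R y) (R x)) z
        = circ (R (circ (R y) x)) z + circ (R (circ y (R x))) z := by
      rw [e2, map_add, map_add, LinearMap.add_apply]
    have g2' : circ z (circ (R y) (R x))
        = circ z (R (circ (R y) x)) + circ z (R (circ y (R x))) := by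
      rw [e2, map_add, map_add]
    have h1 := hpre i j k (R x) hx' (R y) hy' z hz
    have h2 := hpre k i j z hz (R x) hx' (R y) hy'
    have h3 := hpre k j i z hz (R y) hy' (R x) hx'
    rw [sgn_comm K k i] at h2
    rw [sgn_comm K k j] at h3
    set s1 := sgn K i j with hs1
    set s2 := sgn K j k with hs2
    set s3 := sgn K i k with hs3
    have h2' : (s2 * s3) • (circ (circ z (R x)) (R y) - circ z (circ (R x) (R y)))
        = s2 • (circ (circ (R x) z) (R y) - circ (R x) (circ z (R y))) := by
      rw [h2, smul_smul, mul_assoc, hs3, sgn_sq, mul_one]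
    have h3' : (s1 * (s2 * s3)) • (circ (circ z (R y)) (R x) - circ z (circ (R y) (R x)))
        = (s1 * s3) • (circ (circ (R y) z) (R x) - circ (R y) (circ z (R x))) := by
      rw [h3, smul_smul, show s1 * (s2 * s3) * s2 = s1 * s3 * (s2 * s2) by ring,
        hs2, sgn_sq, mul_one]
    simp only [astOp, map_sub, map_smul, LinearMap.sub_apply, LinearMap.smul_apply,
      sgn_add_left, sgn_add_right, ← hs1, ← hs2, ← hs3, sgn_comm K j i]
    have hq : s1 * s1 = 1 := sgn_sq K i j
    linear_combination (norm := module) h1 + h2' - h3' - g1 + s1 • g2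
      + (s2 * s3) • g1' - (s1 * (s2 * s3)) • g2'
      + hq • (circ (R (circ x (R y))) z - (s2 * s3) • circ z (R (circ x (R y)))
          - s2 • circ (circ (R x) z) (R y) + (s2 * s3) • circ (circ z (R x)) (R y))
  · -- Rota-Baxter for ∗
    intro i j x hx y hy
    have e1 := hRB i j (R x) (hR i x hx) y hy
    have e2 := hRB j i y hy (R x) (hR i x hx)
    have e3 := hRB i j x hx y hy
    have e4 := hRB j i y hy x hx
    simp only [astOp]
    rw [e1, e2, e3, e4]
    simp only [map_add, map_sub, map_smul]
    module
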